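/- arXiv:2304.06498 — 4 statements merged into one kernel-verified Lean document; each statement's English description precedes it below -/
import Mathlib

section
/- If x → x' is a move in NIM(k+1,k) (i.e., x' = x − e^{(i)} componentwise where exactly one coordinate i is kept and all other k coordinates are decreased by 1, all of them being positive in x), then B(x') ≤ B(x). -/
/-- `z` is a basic position with parameter `b`: coordinate sum `k*b`, all coordinates
at most `b`, all coordinates even if `b` is even, exactly one even if `b` is odd. -/
def IsBasic (k : ℕ) (z : Fin (k+1) → ℕ) (b : ℕ) : Prop :=
  (∑ i, z i) = k * b ∧ (∀ i, z i ≤ b) ∧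
    (Even b → ∀ i, Even (z i)) ∧ (Odd b → ∃! i, Even (z i))

/-- `Pre k y x` means `y ⪯ x`: the sorted vector of `y` is componentwise ≤ that of `x`. -/
def Pre (k : ℕ) (y x : Fin (k+1) → ℕ) : Prop :=
  ∀ i, (y ∘ Tuple.sort y) i ≤ (x ∘ Tuple.sort x) i

/-- `BVal k x = max { b : some basic z with parameter b satisfies z ⪯ x }`. -/
noncomputable def BVal (k : ℕ) (x : Fin (k+1) → ℕ) : ℕ :=
  sSup {b | ∃ z, IsBasic k z b ∧ Pre k z x}

/-- A move in NIM(k+1,k): keep coordinate `i`, decrease every other (positive) coordinate by 1. -/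
def MoveK (k : ℕ) (x y : Fin (k+1) → ℕ) : Prop :=
  ∃ i, (∀ j, j ≠ i → 0 < x j) ∧ ∀ j, y j = if j = i then x j else x j - 1

/-- The M-move: keep a smallest even coordinate if one exists, otherwise keep a
largest coordinate; decrease the other k (positive) coordinates by 1. -/
def MMove (k : ℕ) (x y : Fin (k+1) → ℕ) : Prop :=
  ∃ i, (∀ j, j ≠ i → 0 < x j) ∧
    ((∃ j, Even (x j)) → Even (x i) ∧ ∀ j, Even (x j) → x i ≤ x j) ∧
    ((∀ j, Odd (x j)) → ∀ j, x j ≤ x i) ∧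
    (∀ j, y j = if j = i then x j else x j - 1)

/-- Exceptional position: all coordinates odd, all `< m`, and `|x| = k*m + k - 1`
for some even `m`. -/
def Exceptional (k : ℕ) (x : Fin (k+1) → ℕ) : Prop :=
  ∃ m, Even m ∧ (∀ i, Odd (x i)) ∧ (∀ i, x i < m) ∧ (∑ i, x i) = k * m + k - 1

/-- `MVal k x m`: playing the M-rule from `x`, the game ends after exactly `m` moves. -/
inductive MVal (k : ℕ) : (Fin (k+1) → ℕ) → ℕ → Prop
  | zero (x) : (¬ ∃ y, MoveK k x y) → MVal k x 0
  | succ (x y m) : MMove k x y → MVal k y m → MVal k x (m + 1)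

/-!
A move only decreases coordinates, and sorting is monotone for the pointwise order, so every
basic `z ⪯ x'` also satisfies `z ⪯ x`. Hence the set whose supremum defines `B(x')` is contained
in the one defining `B(x)`, and the latter is bounded because `b ≤ k * b = |z| ≤ |x|`.
-/

open Finset

namespace Tuple

variable {n : ℕ} {α : Type*} [LinearOrder α]

theorem card_filter_comp_sort_le (f : Fin n → α) (a : α) :
    #{i | (f ∘ sort f) i ≤ a} = #{i | f i ≤ a} :=
  card_equiv (sort f) (by simp)

/-- The `j`-th smallest entry of `f` is the least `a` with more than `j` entries `≤ a`, and
lowering entries can only increase those counts. -/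
theorem comp_sort_le_comp_sort {f g : Fin n → α} (h : f ≤ g) :
    f ∘ sort f ≤ g ∘ sort g := by
  intro j
  have hg : j < #{i | (g ∘ sort g) i ≤ (g ∘ sort g) j} :=
    (lt_card_le_iff_apply_le_of_monotone (monotone_sort g)).2 le_rfl
  rw [card_filter_comp_sort_le] at hg
  rw [← lt_card_le_iff_apply_le_of_monotone (monotone_sort f), card_filter_comp_sort_le]
  exact hg.trans_le (card_le_card fun i => by simpa using (h i).trans)

end Tuple

section

variable {k : ℕ} {x x' y z : Fin (k+1) → ℕ} {b : ℕ}

theorem Pre.trans_le (hzy : Pre k z y) (hyx : y ≤ x) : Pre k z x :=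
  fun i => (hzy i).trans (Tuple.comp_sort_le_comp_sort hyx i)

theorem Pre.sum_le (h : Pre k z x) : ∑ i, z i ≤ ∑ i, x i := by
  rw [← Equiv.sum_comp (Tuple.sort z) z, ← Equiv.sum_comp (Tuple.sort x) x]
  exact sum_le_sum fun i _ => h i

theorem IsBasic.le_sum_of_pre (hk : 0 < k) (hz : IsBasic k z b) (h : Pre k z x) :
    b ≤ ∑ i, x i :=
  calc b ≤ k * b := Nat.le_mul_of_pos_left b hk
    _ = ∑ i, z i := hz.1.symm
    _ ≤ ∑ i, x i := h.sum_le

theorem bddAbove_basic_params (hk : 0 < k) (x : Fin (k+1) → ℕ) :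
    BddAbove {b | ∃ z, IsBasic k z b ∧ Pre k z x} :=
  ⟨∑ i, x i, fun _ ⟨_, hz, h⟩ => hz.le_sum_of_pre hk h⟩

theorem bVal_mono (hk : 0 < k) (h : x' ≤ x) : BVal k x' ≤ BVal k x := by
  rcases Set.eq_empty_or_nonempty {b | ∃ z, IsBasic k z b ∧ Pre k z x'} with he | hne
  · simp [BVal, he]
  · exact csSup_le_csSup (bddAbove_basic_params hk x) hne
      fun _ ⟨z, hz, hpre⟩ => ⟨z, hz, hpre.trans_le h⟩

theorem MoveK.le (h : MoveK k x x') : x' ≤ x := by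
  obtain ⟨i, -, hx'⟩ := h
  intro j
  rw [hx' j]
  split_ifs
  exacts [le_rfl, Nat.sub_le _ _]

end

theorem stmt7 (k : ℕ) (hk : 2 ≤ k) (x x' : Fin (k+1) → ℕ)
    (h : MoveK k x x') : BVal k x' ≤ BVal k x :=
  bVal_mono (by omega) h.le
end

section
/- If x → x' is a move in NIM(k+1,k) and B(x') is even, then B(x') < B(x). -/
/-!
Let `b = B(x')` be even and let `z ⪯ x'` be basic with parameter `b`. After sorting, the
move is still a move: `sort x` exceeds `sort x'` by one in every coordinate but one, say
the `p`-th, because `sort x' ≤ sort x ≤ sort x' + 1` and the sums differ by `k`. Adding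
one to every coordinate of `sort z` except the `p`-th gives a vector that still lies below
`sort x`, has sum `k (b + 1)`, coordinates at most `b + 1`, and exactly one even
coordinate; so it is basic with the odd parameter `b + 1`, and `B(x) ≥ b + 1`.
-/

open Finset

namespace Tuple

theorem comp_sort_le_comp_sort_of_le {α : Type*} [LinearOrder α] {n : ℕ} {u v : Fin n → α}
    (h : u ≤ v) : u ∘ sort u ≤ v ∘ sort v := by
  intro i
  -- Pigeonhole: `sort v` maps `Iic i` and `sort u` maps `Ici i` onto sets of sizes
  -- `i + 1` and `n - i`, which must share some index `l`.
  obtain ⟨l, hl⟩ := inter_nonempty_of_card_lt_card_add_card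
    (subset_univ ((Iic i).image (sort v))) (subset_univ ((Ici i).image (sort u)))
    (by simp [card_image_of_injective _ (Equiv.injective _)]; omega)
  obtain ⟨hlv, hlu⟩ := mem_inter.mp hl
  obtain ⟨j₁, hj₁, rfl⟩ := mem_image.mp hlv
  obtain ⟨j₂, hj₂, hj⟩ := mem_image.mp hlu
  calc (u ∘ sort u) i ≤ (u ∘ sort u) j₂ := monotone_sort u (mem_Ici.mp hj₂)
    _ = u (sort v j₁) := by simp [hj]
    _ ≤ v (sort v j₁) := h _
    _ ≤ (v ∘ sort v) i := monotone_sort v (mem_Iic.mp hj₁)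

theorem comp_comp_sort_of_monotone {α β : Type*} [LinearOrder α] [LinearOrder β] {n : ℕ}
    {g : α → β} (hg : Monotone g) (f : Fin n → α) :
    (g ∘ f) ∘ sort (g ∘ f) = g ∘ (f ∘ sort f) :=
  ((comp_sort_eq_comp_iff_monotone).mpr (hg.comp (monotone_sort f))).symm

end Tuple

theorem sum_eq_sum_add_of_forall_eq_ite {n : ℕ} {f g : Fin (n + 1) → ℕ} (p : Fin (n + 1))
    (h : ∀ j, f j = if j = p then g j else g j + 1) : ∑ j, f j = ∑ j, g j + n := by
  have hshift : ∀ j, f j + (if j = p then 1 else 0) = g j + 1 := by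
    intro j; rw [h j]; split_ifs <;> rfl
  have := sum_congr rfl fun j (_ : j ∈ univ) => hshift j
  simp only [sum_add_distrib, sum_ite_eq', mem_univ, if_true, sum_const, card_univ,
    Fintype.card_fin, smul_eq_mul, mul_one] at this
  omega

theorem exists_forall_eq_ite_of_sum_eq {n : ℕ} {u v : Fin (n + 1) → ℕ} (hle : u ≤ v)
    (hle_succ : ∀ j, v j ≤ u j + 1) (hsum : ∑ j, v j = ∑ j, u j + n) :
    ∃ p, ∀ j, v j = if j = p then u j else u j + 1 := by
  have hshift : ∀ j, v j + (if v j = u j then 1 else 0) = u j + 1 := by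
    intro j; have : u j ≤ v j := hle j; have := hle_succ j; split_ifs <;> omega
  have hcard : #(univ.filter fun j => v j = u j) = 1 := by
    have := sum_congr rfl fun j (_ : j ∈ univ) => hshift j
    simp only [sum_add_distrib, sum_boole, sum_const, card_univ, Fintype.card_fin,
      smul_eq_mul, mul_one, Nat.cast_id] at this
    omega
  obtain ⟨p, hp⟩ := card_eq_one.mp hcard
  refine ⟨p, fun j => ?_⟩
  have hj : v j = u j ↔ j = p := by
    simpa using congrArg (j ∈ ·) hp
  have : u j ≤ v j := hle j; have := hle_succ j
  split_ifs with hjp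
  · exact hj.mpr hjp
  · have := mt hj.mp hjp; omega

variable {k : ℕ}

theorem sum_le_sum_of_pre {y x : Fin (k + 1) → ℕ} (h : Pre k y x) :
    ∑ i, y i ≤ ∑ i, x i := by
  calc ∑ i, y i = ∑ i, (y ∘ Tuple.sort y) i := (Equiv.sum_comp _ _).symm
    _ ≤ ∑ i, (x ∘ Tuple.sort x) i := sum_le_sum fun i _ => h i
    _ = ∑ i, x i := Equiv.sum_comp _ _

theorem pre_of_le_comp_sort {y x : Fin (k + 1) → ℕ}
    (h : ∀ i, y i ≤ (x ∘ Tuple.sort x) i) : Pre k y x := by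
  intro i
  simpa only [Tuple.comp_perm_comp_sort_eq_comp_sort] using
    Tuple.comp_sort_le_comp_sort_of_le (v := x ∘ Tuple.sort x) h i

theorem IsBasic.comp_perm {z : Fin (k + 1) → ℕ} {b : ℕ} (hz : IsBasic k z b)
    (σ : Equiv.Perm (Fin (k + 1))) : IsBasic k (z ∘ σ) b := by
  obtain ⟨hsum, hle, heven, hodd⟩ := hz
  exact ⟨(Equiv.sum_comp σ z).trans hsum, fun i => hle _, fun hb i => heven hb _,
    fun hb => σ.existsUnique_congr_right.mpr (hodd hb)⟩

theorem IsBasic.succ_of_even {z : Fin (k + 1) → ℕ} {b : ℕ} (hz : IsBasic k z b)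
    (hb : Even b) (p : Fin (k + 1)) :
    IsBasic k (fun j => if j = p then z j else z j + 1) (b + 1) := by
  obtain ⟨hsum, hle, heven, -⟩ := hz
  have hzeven := heven hb
  refine ⟨?_, fun j => ?_, fun hb' => absurd hb (Nat.even_add_one.mp hb'), fun _ => ?_⟩
  · rw [sum_eq_sum_add_of_forall_eq_ite p fun _ => rfl, hsum]; ring
  · have := hle j; dsimp only; split_ifs <;> omega
  · refine ⟨p, by simpa using hzeven p, fun j hj => by_contra fun hjp => ?_⟩
    simp only [if_neg hjp, Nat.even_add_one] at hj
    exact hj (hzeven j)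

theorem bddAbove_setOf_isBasic_pre (hk : 0 < k) (x : Fin (k + 1) → ℕ) :
    BddAbove {b | ∃ z, IsBasic k z b ∧ Pre k z x} := by
  refine ⟨∑ i, x i, ?_⟩
  rintro b ⟨z, ⟨hsum, -⟩, hzx⟩
  have := sum_le_sum_of_pre hzx
  have := Nat.le_mul_of_pos_left b hk
  omega

theorem exists_isBasic_BVal_pre (hk : 0 < k) (x : Fin (k + 1) → ℕ) :
    ∃ z, IsBasic k z (BVal k x) ∧ Pre k z x := by
  have hzero : 0 ∈ {b | ∃ z, IsBasic k z b ∧ Pre k z x} :=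
    ⟨0, ⟨by simp, fun _ => le_rfl, fun _ _ => Even.zero, by simp⟩, fun _ => by simp⟩
  exact Nat.sSup_mem ⟨0, hzero⟩ (bddAbove_setOf_isBasic_pre hk x)

theorem le_BVal (hk : 0 < k) {x z : Fin (k + 1) → ℕ} {b : ℕ} (hz : IsBasic k z b)
    (hzx : Pre k z x) : b ≤ BVal k x :=
  le_csSup (bddAbove_setOf_isBasic_pre hk x) ⟨z, hz, hzx⟩

theorem MoveK.exists_comp_sort_eq_ite {x x' : Fin (k + 1) → ℕ} (h : MoveK k x x') :
    ∃ p, ∀ j, (x ∘ Tuple.sort x) j =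
      if j = p then (x' ∘ Tuple.sort x') j else (x' ∘ Tuple.sort x') j + 1 := by
  obtain ⟨i, hpos, hx'⟩ := h
  have hx : ∀ j, x j = if j = i then x' j else x' j + 1 := by
    intro j; rw [hx' j]; split_ifs with hj
    · rfl
    · have := hpos j hj; omega
  have hle : x' ≤ x := fun j => show x' j ≤ x j by rw [hx j]; split_ifs <;> omega
  have hle_succ : x ≤ (· + 1) ∘ x' := fun j => show x j ≤ x' j + 1 by
    rw [hx j]; split_ifs <;> omega
  apply exists_forall_eq_ite_of_sum_eq (Tuple.comp_sort_le_comp_sort_of_le hle)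
  · intro j
    have := Tuple.comp_sort_le_comp_sort_of_le hle_succ j
    rwa [Tuple.comp_comp_sort_of_monotone (fun _ _ h => Nat.succ_le_succ h)] at this
  · simp only [Function.comp_apply, Equiv.sum_comp]
    exact sum_eq_sum_add_of_forall_eq_ite i hx

theorem stmt9 (k : ℕ) (hk : 2 ≤ k) (x x' : Fin (k+1) → ℕ)
    (h : MoveK k x x') (heven : Even (BVal k x')) :
    BVal k x' < BVal k x := by
  obtain ⟨z, hz, hzx'⟩ := exists_isBasic_BVal_pre (by omega) x'
  obtain ⟨p, hp⟩ := h.exists_comp_sort_eq_ite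
  have hbasic := (hz.comp_perm (Tuple.sort z)).succ_of_even heven p
  refine Nat.lt_of_succ_le (le_BVal (by omega) hbasic (pre_of_le_comp_sort fun j => ?_))
  have := hzx' j
  simp only [Function.comp_apply] at this hp ⊢
  rw [hp j]
  split_ifs <;> omega
end

section
/- An M-move from a basic position z (the M-rule: if all coordinates are odd keep a largest one, otherwise keep a smallest even coordinate and decrease all others by 1) leads to a basic position z' with b(z') = b(z) − 1, provided b(z) ≥ 1. -/
theorem stmt14 (k : ℕ) (hk : 2 ≤ k) (z z' : Fin (k+1) → ℕ) (b : ℕ)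
    (hz : IsBasic k z b) (hb : 1 ≤ b) (h : MMove k z z') :
    IsBasic k z' (b - 1) := by
  obtain ⟨i, hpos, hevR, hodR, hy⟩ := h
  obtain ⟨hsum, hle, hEb, hOb⟩ := hz
  -- i is even and minimal among even coordinates
  have hiE : Even (z i) ∧ ∀ j, Even (z j) → z i ≤ z j := by
    rcases Nat.even_or_odd b with hbE | hbO
    · exact hevR ⟨i, hEb hbE i⟩
    · obtain ⟨j0, hj0, _⟩ := hOb hbO
      exact hevR ⟨j0, hj0⟩
  -- sum identity
  have key : (∑ j, z' j) + k = ∑ j, z j := by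
    have hc : ({i}ᶜ : Finset (Fin (k+1))).card = k := by
      simp [Finset.card_compl]
    rw [Fintype.sum_eq_add_sum_compl i z', Fintype.sum_eq_add_sum_compl i z, hy i, if_pos rfl]
    have h2 : (∑ j ∈ ({i}ᶜ : Finset (Fin (k+1))), z j)
        = (∑ j ∈ ({i}ᶜ : Finset (Fin (k+1))), z' j) + ({i}ᶜ : Finset (Fin (k+1))).card := by
      rw [Finset.card_eq_sum_ones, ← Finset.sum_add_distrib]
      refine Finset.sum_congr rfl fun j hj => ?_
      have hji : j ≠ i := by simpa using hj
      have := hpos j hji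
      rw [hy j, if_neg hji]
      omega
    rw [hc] at h2
    omega
  have e : k * (b-1) + k = k * b := by
    have hbe : (b - 1) + 1 = b := Nat.sub_add_cancel hb
    calc k*(b-1)+k = k*((b-1)+1) := by ring
      _ = k*b := by rw [hbe]
  have hsum' : ∑ j, z' j = k * (b - 1) := by
    have h3 : (∑ j, z' j) + k = k*(b-1) + k := by rw [key, hsum, ← e]
    exact Nat.add_right_cancel h3
  -- bound on the kept coordinate
  have hib : z i ≤ b - 1 := by
    by_contra hlt
    push_neg at hlt
    have hib' : z i = b := le_antisymm (hle i) (by omega)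
    rcases Nat.even_or_odd b with hbE | hbO
    · have hall : ∀ j, z j = b := fun j =>
        le_antisymm (hle j) (hib' ▸ hiE.2 j (hEb hbE j))
      have e1 : ∑ j, z j = (k+1) * b := by
        simp [hall, Finset.sum_const, Finset.card_univ]
      have h4 := hsum.symm.trans e1
      nlinarith
    · have hE := hiE.1
      rw [hib', Nat.even_iff] at hE
      rw [Nat.odd_iff] at hbO
      omega
  have hbound : ∀ j, z' j ≤ b - 1 := by
    intro j
    rw [hy j]
    by_cases hj : j = i
    · rw [if_pos hj, hj]; exact hib
    · rw [if_neg hj]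
      have := hle j
      omega
  refine ⟨hsum', hbound, ?_, ?_⟩
  · -- Even (b-1) → all even; here b must be odd
    intro hEb1 j
    have hbO : Odd b := by
      rcases Nat.even_or_odd b with hbE | hbO
      · exfalso; rw [Nat.even_iff] at hbE hEb1; omega
      · exact hbO
    obtain ⟨j0, hj0E, hj0U⟩ := hOb hbO
    have hii : i = j0 := hj0U i hiE.1
    rw [hy j]
    by_cases hj : j = i
    · rw [if_pos hj, hj]; exact hiE.1
    · rw [if_neg hj]
      have hjO : ¬ Even (z j) := fun hE => hj ((hj0U j hE).trans hii.symm)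
      have h1 := hpos j hj
      rw [Nat.even_iff] at hjO ⊢
      omega
  · -- Odd (b-1) → unique even; here b must be even
    intro hOb1
    have hbE : Even b := by
      rcases Nat.even_or_odd b with hbE | hbO
      · exact hbE
      · exfalso; rw [Nat.odd_iff] at hbO hOb1; omega
    refine ⟨i, ?_, ?_⟩
    · show Even (z' i)
      rw [hy i, if_pos rfl]; exact hiE.1
    · intro j hjE
      have hjE' : Even (z' j) := hjE
      by_contra hj
      rw [hy j, if_neg hj] at hjE'
      rename' hjE' => hjE
      have hE := hEb hbE j
      have h1 := hpos j hj
      rw [Nat.even_iff] at hE hjE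
      omega
end

section
/- Let M(x) be the number of moves until a terminal position when both players play the M-rule from x. Then M(x) = B(x) for every non-exceptional position x, and M(x) = B(x) + 1 for every exceptional position x. -/
/-!
Along an M-move `x → y` one has `B(y) = B(x) - 1` when `x` is not exceptional and
`B(y) = B(x)` when it is; moreover a position reached by an M-move is never exceptional and a
terminal position has `B = 0`, so the theorem follows by induction on the play.

Up to permuting coordinates, `z ⪯ x` may be replaced by `z ≤ x` coordinatewise. A basic
position with parameter `b` then lies below `w` as soon as the coordinatewise largest candidate
(every coordinate rounded down to `min (w j) b` with the right parity) has sum at least `k * b`,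
so each inequality between `B(x)` and `B(y)` comes down to comparing two coordinate sums.
Coordinatewise the candidate loses (or gains) one unit against the given basic position, except
at one to three coordinates singled out by the M-rule; the case where no compensation is
possible is exactly the exceptional configuration.
-/

open Finset

namespace Nim

section Sums

lemma exists_le_sum_eq {ι : Type*} (s : Finset ι) (c : ι → ℕ) {n : ℕ}
    (hn : n ≤ ∑ j ∈ s, c j) : ∃ u ≤ c, ∑ j ∈ s, u j = n := by
  classical
  induction s using Finset.cons_induction generalizing n with
  | empty => exact ⟨0, fun _ => Nat.zero_le _, by simp_all⟩
  | cons a s ha ih =>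
    rw [sum_cons] at hn
    obtain ⟨u, hu, hsum⟩ := ih (n := n - min (c a) n) (by omega)
    refine ⟨Function.update u a (min (c a) n), fun j => ?_, ?_⟩
    · rcases eq_or_ne j a with rfl | hj
      · simp
      · simpa [hj] using hu j
    · rw [sum_cons, Function.update_self,
        sum_congr rfl fun j hj => Function.update_of_ne (ne_of_mem_of_not_mem hj ha) _ _, hsum]
      omega

variable {ι : Type*} [Fintype ι] {f g : ι → ℕ}

lemma sum_sub_sum_eq_card_mul_add (c : ℤ) :
    ((∑ j, f j : ℕ) : ℤ) - (∑ j, g j : ℕ)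
      = Fintype.card ι * c + ∑ j, ((f j : ℤ) - g j - c) := by
  simp only [sum_sub_distrib, sum_const, card_univ, nsmul_eq_mul]
  push_cast
  ring

lemma sum_sub_sum_eq_of_eq_off (c : ℤ) (S : Finset ι)
    (h : ∀ j ∉ S, (f j : ℤ) - g j = c) :
    ((∑ j, f j : ℕ) : ℤ) - (∑ j, g j : ℕ)
      = Fintype.card ι * c + ∑ j ∈ S, ((f j : ℤ) - g j - c) := by
  rw [sum_sub_sum_eq_card_mul_add c,
    sum_subset (subset_univ S) fun j _ hj => by simp [h j hj]]

lemma le_sum_sub_sum_of_le_off (c : ℤ) (S : Finset ι)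
    (h : ∀ j ∉ S, c ≤ (f j : ℤ) - g j) :
    Fintype.card ι * c + ∑ j ∈ S, ((f j : ℤ) - g j - c)
      ≤ ((∑ j, f j : ℕ) : ℤ) - (∑ j, g j : ℕ) := by
  rw [sum_sub_sum_eq_card_mul_add c]
  exact add_le_add_right
    (sum_le_sum_of_subset_of_nonneg (subset_univ S) fun j _ hj => sub_nonneg.mpr (h j hj)) _

end Sums

section Floors

def evenFloor (t : ℕ) : ℕ := 2 * (t / 2)

/-- The largest odd number `≤ t` when `1 ≤ t`; note `oddFloor 0 = 1`. -/
def oddFloor (t : ℕ) : ℕ := 2 * ((t - 1) / 2) + 1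

lemma evenFloor_le (t : ℕ) : evenFloor t ≤ t := by unfold evenFloor; omega

lemma even_evenFloor (t : ℕ) : Even (evenFloor t) := even_two_mul _

lemma le_evenFloor_min {t a c : ℕ} (ht : t % 2 = 0) (ha : t ≤ a) (hc : t ≤ c) :
    t ≤ evenFloor (min a c) := by
  unfold evenFloor; omega

lemma oddFloor_le {t : ℕ} (ht : 1 ≤ t) : oddFloor t ≤ t := by unfold oddFloor; omega

lemma odd_oddFloor (t : ℕ) : Odd (oddFloor t) := odd_two_mul_add_one _

lemma le_oddFloor_min {t a c : ℕ} (ht : t % 2 = 1) (ha : t ≤ a) (hc : t ≤ c) :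
    t ≤ oddFloor (min a c) := by
  unfold oddFloor; omega

end Floors

section Basic

variable {k b : ℕ} {x y z w : Fin (k+1) → ℕ}

lemma IsBasic.comp_perm (hz : IsBasic k z b) (σ : Equiv.Perm (Fin (k+1))) :
    IsBasic k (z ∘ σ) b := by
  obtain ⟨hsum, hle, hev, hodd⟩ := hz
  exact ⟨by rw [← hsum]; exact Equiv.sum_comp σ z, fun j => hle _, fun hb j => hev hb _,
    fun hb => σ.existsUnique_congr_right.mpr (hodd hb)⟩

lemma isBasic_zero (k : ℕ) : IsBasic k 0 0 :=
  ⟨by simp, fun _ => le_rfl, fun _ _ => Even.zero, fun h => absurd h (by decide)⟩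

lemma IsBasic.eq_zero_of_two_zeros (hz : IsBasic k z b) {j₁ j₂ : Fin (k+1)}
    (hne : j₁ ≠ j₂) (h₁ : z j₁ = 0) (h₂ : z j₂ = 0) : b = 0 := by
  have key := le_sum_sub_sum_of_le_off (f := fun _ => b) (g := z) 0 {j₁, j₂}
    fun j _ => by simp [hz.2.1 j]
  simp only [sum_pair hne, sum_const, card_univ, Fintype.card_fin, smul_eq_mul, hz.1, h₁, h₂]
    at key
  push_cast at key
  nlinarith

lemma IsBasic.odd_of_ne (hz : IsBasic k z b) (hb : Odd b) {i₀ j : Fin (k+1)}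
    (hi₀ : Even (z i₀)) (hj : j ≠ i₀) : z j % 2 = 1 := by
  obtain ⟨_, -, huniq⟩ := hz.2.2.2 hb
  refine Nat.odd_iff.mp (Nat.not_even_iff_odd.mp fun he => hj ?_)
  rw [huniq j he, huniq i₀ hi₀]

lemma exists_isBasic_le {v : Fin (k+1) → ℕ} (hvb : ∀ j, v j ≤ b)
    (hev : Even b → ∀ j, Even (v j)) (hodd : Odd b → ∃! j, Even (v j))
    (hsum : k * b ≤ ∑ j, v j) : ∃ z, IsBasic k z b ∧ z ≤ v := by
  have hmod : ∑ j, v j % 2 = k * (b % 2) := by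
    rcases Nat.even_or_odd b with hb | hb
    · rw [Nat.even_iff.mp hb, mul_zero]
      exact sum_eq_zero fun j _ => Nat.even_iff.mp (hev hb j)
    · obtain ⟨p, hp, huniq⟩ := hodd hb
      have hv2 : ∀ j, v j % 2 = if j = p then 0 else 1 := fun j => by
        split_ifs with hj
        · exact Nat.even_iff.mp (hj ▸ hp)
        · exact Nat.odd_iff.mp (Nat.not_even_iff_odd.mp fun he => hj (huniq j he))
      simp [hv2, Nat.odd_iff.mp hb, sum_ite, filter_ne']
  have hkb : k * b = k * (b % 2) + 2 * (k * (b / 2)) := by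
    conv_lhs => rw [← Nat.mod_add_div b 2]
    ring
  have hhalf : (k * b - ∑ j, v j % 2) / 2 ≤ ∑ j, v j / 2 := by
    have h : ∑ j, v j = ∑ j, v j % 2 + 2 * ∑ j, v j / 2 := by
      rw [mul_sum, ← sum_add_distrib]
      exact sum_congr rfl fun j _ => (Nat.mod_add_div _ _).symm
    omega
  obtain ⟨u, hu, hu_sum⟩ := exists_le_sum_eq univ (fun j => v j / 2) hhalf
  have hzv : ∀ j, v j % 2 + 2 * u j ≤ v j := fun j => by have : u j ≤ v j / 2 := hu j; omega
  have hpar_eq : ∀ j, Even (v j % 2 + 2 * u j) ↔ Even (v j) := fun j => by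
    simp only [Nat.even_iff]; omega
  refine ⟨fun j => v j % 2 + 2 * u j, ⟨?_, fun j => (hzv j).trans (hvb j), ?_, ?_⟩, hzv⟩
  · rw [sum_add_distrib, ← mul_sum, hu_sum]; omega
  · exact fun hb j => (hpar_eq j).mpr (hev hb j)
  · exact fun hb => (existsUnique_congr hpar_eq).mpr (hodd hb)

def basicBelow (k : ℕ) (x : Fin (k+1) → ℕ) : Set ℕ :=
  {b | ∃ z, IsBasic k z b ∧ z ≤ x}

lemma zero_mem_basicBelow (k : ℕ) (x : Fin (k+1) → ℕ) : 0 ∈ basicBelow k x :=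
  ⟨0, isBasic_zero k, fun _ => Nat.zero_le _⟩

lemma mem_basicBelow_of_even (hb : Even b) (h : k * b ≤ ∑ j, evenFloor (min (w j) b)) :
    b ∈ basicBelow k w := by
  obtain ⟨z, hz, hzv⟩ := exists_isBasic_le (fun j => (evenFloor_le _).trans (min_le_right _ _))
    (fun _ j => even_evenFloor _) (fun hb' => absurd hb (Nat.not_even_iff_odd.mpr hb')) h
  exact ⟨z, hz, fun j => (hzv j).trans ((evenFloor_le _).trans (min_le_left _ _))⟩

lemma mem_basicBelow_of_odd (hb : Odd b) (p : Fin (k+1)) (hw : ∀ j ≠ p, 1 ≤ w j)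
    (h : k * b ≤ ∑ j, if j = p then evenFloor (min (w j) b) else oddFloor (min (w j) b)) :
    b ∈ basicBelow k w := by
  have hb1 : 1 ≤ b := hb.pos
  have hv : ∀ j, (if j = p then evenFloor (min (w j) b) else oddFloor (min (w j) b))
      ≤ min (w j) b := fun j => by
    split_ifs with hj
    · exact evenFloor_le _
    · exact oddFloor_le (le_min (hw j hj) hb1)
  have hpivot :
      ∃! j, Even (if j = p then evenFloor (min (w j) b) else oddFloor (min (w j) b)) := by
    refine ⟨p, by simpa using even_evenFloor _, fun j hj => ?_⟩
    by_contra hjp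
    simp only [hjp, if_false] at hj
    exact Nat.not_even_iff_odd.mpr (odd_oddFloor _) hj
  obtain ⟨z, hz, hzv⟩ := exists_isBasic_le (fun j => (hv j).trans (min_le_right _ _))
    (fun hb' => absurd hb' (Nat.not_even_iff_odd.mpr hb)) (fun _ => hpivot) h
  exact ⟨z, hz, fun j => (hzv j).trans ((hv j).trans (min_le_left _ _))⟩

lemma pre_of_le (h : z ≤ x) : Pre k z x := by
  classical
  intro i
  set a := (x ∘ Tuple.sort x) i
  have hsort (f : Fin (k+1) → ℕ) : #{t | (f ∘ Tuple.sort f) t ≤ a} = #{t | f t ≤ a} :=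
    card_equiv (Tuple.sort f) (by simp)
  have hx : (i : ℕ) < #{t | (x ∘ Tuple.sort x) t ≤ a} :=
    (Tuple.lt_card_le_iff_apply_le_of_monotone (Tuple.monotone_sort x)).mpr le_rfl
  have hxz : #{t | x t ≤ a} ≤ #{t | z t ≤ a} :=
    card_le_card (monotone_filter_right _ fun t _ hxt => (h t).trans hxt)
  rw [hsort] at hx
  rw [← hsort z] at hxz
  exact (Tuple.lt_card_le_iff_apply_le_of_monotone (Tuple.monotone_sort z)).mp
    (hx.trans_le hxz)

lemma exists_perm_comp_le_of_pre (h : Pre k z x) :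
    ∃ σ : Equiv.Perm (Fin (k+1)), z ∘ σ ≤ x :=
  ⟨(Tuple.sort x).symm.trans (Tuple.sort z), fun j => by
    simpa [Function.comp] using h ((Tuple.sort x).symm j)⟩

lemma bVal_eq_sSup_basicBelow : BVal k x = sSup (basicBelow k x) := by
  refine congrArg sSup (Set.ext fun b => ⟨?_, ?_⟩)
  · rintro ⟨z, hz, hzx⟩
    obtain ⟨σ, hσ⟩ := exists_perm_comp_le_of_pre hzx
    exact ⟨z ∘ σ, IsBasic.comp_perm hz σ, hσ⟩
  · rintro ⟨z, hz, hzx⟩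
    exact ⟨z, hz, pre_of_le hzx⟩

lemma basicBelow_bddAbove (hk : 0 < k) (x : Fin (k+1) → ℕ) : BddAbove (basicBelow k x) := by
  refine ⟨∑ j, x j, ?_⟩
  rintro b ⟨z, hz, hzx⟩
  calc b ≤ k * b := Nat.le_mul_of_pos_left b hk
    _ = ∑ j, z j := hz.1.symm
    _ ≤ ∑ j, x j := sum_le_sum fun j _ => hzx j

lemma bVal_mem_basicBelow (hk : 0 < k) (x : Fin (k+1) → ℕ) : BVal k x ∈ basicBelow k x := by
  rw [bVal_eq_sSup_basicBelow]
  exact Nat.sSup_mem ⟨0, zero_mem_basicBelow k x⟩ (basicBelow_bddAbove hk x)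

lemma le_bVal (hk : 0 < k) (hb : b ∈ basicBelow k x) : b ≤ BVal k x := by
  rw [bVal_eq_sSup_basicBelow]
  exact le_csSup (basicBelow_bddAbove hk x) hb

lemma bVal_mono (hk : 0 < k) (h : y ≤ x) : BVal k y ≤ BVal k x := by
  obtain ⟨z, hz, hzy⟩ := bVal_mem_basicBelow hk y
  exact le_bVal hk ⟨z, hz, hzy.trans h⟩

end Basic

section Moves

variable {k : ℕ} {x y : Fin (k+1) → ℕ}

lemma exists_keep_of_mMove (h : MMove k x y) : ∃ i, y i = x i ∧ (∀ j ≠ i, y j + 1 = x j) ∧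
    ((∃ j, Even (x j)) → Even (x i) ∧ ∀ j, Even (x j) → x i ≤ x j) ∧
    ((∀ j, Odd (x j)) → ∀ j, x j ≤ x i) := by
  obtain ⟨i, hpos, hE, hO, hy⟩ := h
  refine ⟨i, by simp [hy], fun j hj => ?_, hE, hO⟩
  rw [hy, if_neg hj]
  exact Nat.sub_add_cancel (hpos j hj)

lemma exists_ne_of_pos (hk : 0 < k) (i : Fin (k+1)) : ∃ j, j ≠ i := by
  have : Nontrivial (Fin (k+1)) := Fin.nontrivial_iff_two_le.mpr (by omega)
  exact exists_ne i

lemma not_exceptional_of_mMove (hk : 0 < k) (h : MMove k x y) : ¬ Exceptional k y := by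
  obtain ⟨i, hyi, hyj, hE, -⟩ := exists_keep_of_mMove h
  rintro ⟨m, -, hodd, -⟩
  by_cases hev : ∃ j, Even (x j)
  · exact Nat.not_even_iff_odd.mpr (hyi ▸ hodd i) (hE hev).1
  · obtain ⟨j, hj⟩ := exists_ne_of_pos hk i
    have hxj : Odd (x j) := Nat.not_even_iff_odd.mp fun h => hev ⟨j, h⟩
    have hyj' := hyj j hj
    have hoddj := hodd j
    rw [Nat.odd_iff] at hxj hoddj
    omega

lemma le_of_mMove (hmove : MMove k x y) : y ≤ x := fun j => by
  obtain ⟨i, hyi, hyj, -⟩ := exists_keep_of_mMove hmove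
  rcases eq_or_ne j i with rfl | hji
  · exact hyi.le
  · exact (Nat.le_succ _).trans (hyj j hji).le

lemma le_add_one_of_mMove (hmove : MMove k x y) (j : Fin (k+1)) : x j ≤ y j + 1 := by
  obtain ⟨i, hyi, hyj, -⟩ := exists_keep_of_mMove hmove
  rcases eq_or_ne j i with rfl | hji
  · omega
  · exact (hyj j hji).ge

lemma exists_two_zeros_of_terminal (h : ¬ ∃ y, MoveK k x y) :
    ∃ j₁ j₂, j₁ ≠ j₂ ∧ x j₁ = 0 ∧ x j₂ = 0 := by
  by_contra! hc
  obtain ⟨i, hi⟩ : ∃ i, ∀ j ≠ i, 0 < x j := by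
    by_cases hz : ∃ i, x i = 0
    · obtain ⟨i, hi⟩ := hz
      exact ⟨i, fun j hj => Nat.pos_of_ne_zero (hc i j hj.symm hi)⟩
    · push Not at hz
      exact ⟨0, fun j _ => Nat.pos_of_ne_zero (hz j)⟩
  exact h ⟨_, i, hi, fun j => rfl⟩

lemma bVal_eq_zero_of_terminal (hk : 0 < k) (h : ¬ ∃ y, MoveK k x y) : BVal k x = 0 := by
  obtain ⟨j₁, j₂, hne, h₁, h₂⟩ := exists_two_zeros_of_terminal h
  obtain ⟨z, hz, hzx⟩ := bVal_mem_basicBelow hk x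
  exact IsBasic.eq_zero_of_two_zeros hz hne (Nat.eq_zero_of_le_zero (h₁ ▸ hzx j₁))
    (Nat.eq_zero_of_le_zero (h₂ ▸ hzx j₂))

lemma not_exceptional_of_terminal (h : ¬ ∃ y, MoveK k x y) : ¬ Exceptional k x := by
  obtain ⟨j, -, -, hj, -⟩ := exists_two_zeros_of_terminal h
  rintro ⟨m, -, hodd, -⟩
  simpa [hj] using hodd j

end Moves

section Exceptional

variable {k b m : ℕ} {x y : Fin (k+1) → ℕ}

lemma lt_of_mem_basicBelow_of_exceptional (hm : Even m) (hodd : ∀ j, Odd (x j))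
    (hsum : ∑ j, x j + 1 = k * (m + 1)) (hb : b ∈ basicBelow k x) : b < m := by
  obtain ⟨z, hz, hzx⟩ := hb
  have hbm : b ≤ m := by
    refine Nat.lt_succ_iff.mp (Nat.lt_of_mul_lt_mul_left (a := k) ?_)
    calc k * b = ∑ j, z j := hz.1.symm
      _ ≤ ∑ j, x j := sum_le_sum fun j _ => hzx j
      _ < k * (m + 1) := by omega
  refine hbm.lt_of_ne fun hbm => ?_
  subst hbm
  have key := le_sum_sub_sum_of_le_off (f := x) (g := z) 1 ∅ fun j _ => by
    have h1 := Nat.even_iff.mp (hz.2.2.1 hm j)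
    have h2 := Nat.odd_iff.mp (hodd j)
    have : z j ≤ x j := hzx j
    omega
  rw [sum_empty, Fintype.card_fin, hz.1] at key
  rw [mul_add_one] at hsum
  omega

lemma eq_of_eq_one_of_eq_one_of_exceptional (hk : 2 ≤ k) (hlt : ∀ j, x j < m)
    (hsum : ∑ j, x j + 1 = k * (m + 1)) {j₁ j₂ : Fin (k+1)} (h₁ : x j₁ = 1)
    (h₂ : x j₂ = 1) :
    j₁ = j₂ := by
  by_contra hne
  have key := le_sum_sub_sum_of_le_off (f := fun _ => m) (g := x) 1 {j₁, j₂} fun j _ => by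
    have : x j < m := hlt j
    omega
  simp only [sum_pair hne, sum_const, card_univ, Fintype.card_fin, smul_eq_mul, h₁, h₂] at key
  have hm := hlt j₁
  push_cast at key
  rw [mul_add_one] at hsum
  nlinarith

lemma exists_pivot_of_exceptional (hk : 2 ≤ k) (hodd : ∀ j, Odd (x j)) (hlt : ∀ j, x j < m)
    (hsum : ∑ j, x j + 1 = k * (m + 1)) (i : Fin (k+1)) :
    ∃ p ≠ i, ∀ j ≠ i, j ≠ p → 3 ≤ x j := by
  by_cases h1 : ∃ p ≠ i, x p = 1
  · obtain ⟨p, hpi, hp⟩ := h1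
    refine ⟨p, hpi, fun j _ hjp => ?_⟩
    have := Nat.odd_iff.mp (hodd j)
    by_contra
    exact hjp (eq_of_eq_one_of_eq_one_of_exceptional hk hlt hsum (by omega) hp)
  · push Not at h1
    obtain ⟨p, hp⟩ := exists_ne_of_pos (by omega) i
    refine ⟨p, hp, fun j hji _ => ?_⟩
    have := h1 j hji
    have := Nat.odd_iff.mp (hodd j)
    omega

lemma pred_mem_basicBelow_of_mMove_of_exceptional (hk : 2 ≤ k) (hmove : MMove k x y)
    (hm : Even m) (hodd : ∀ j, Odd (x j)) (hlt : ∀ j, x j < m)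
    (hsum : ∑ j, x j + 1 = k * (m + 1)) : m - 1 ∈ basicBelow k y := by
  obtain ⟨i, hyi, hyj, -, -⟩ := exists_keep_of_mMove hmove
  obtain ⟨p, hpi, hp3⟩ := exists_pivot_of_exceptional hk hodd hlt hsum i
  have hxodd := fun j => Nat.odd_iff.mp (hodd j)
  have hm2 := Nat.even_iff.mp hm
  have hm0 : 1 ≤ m := by have := hlt i; omega
  refine mem_basicBelow_of_odd (Nat.odd_iff.mpr (by omega)) p (fun j hjp => ?_) ?_
  · rcases eq_or_ne j i with rfl | hji
    · have := hxodd j; omega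
    · have := hp3 j hji hjp; have := hyj j hji; omega
  set G := fun j => if j = p then evenFloor (min (y j) (m - 1)) else oddFloor (min (y j) (m - 1))
  show k * (m - 1) ≤ ∑ j, G j
  have hGi : x i ≤ G i := by
    simp only [G, if_neg hpi.symm]
    have := hlt i
    exact le_oddFloor_min (hxodd i) hyi.ge (by omega)
  have hGp : x p - 1 ≤ G p := by
    simp only [G, if_pos rfl]
    have := hxodd p; have := hlt p; have := hyj p hpi
    exact le_evenFloor_min (by omega) (by omega) (by omega)
  have key := le_sum_sub_sum_of_le_off (f := G) (g := x) (-2) {i, p} fun j hj => by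
    simp only [mem_insert, mem_singleton, not_or] at hj
    have := hxodd j; have := hlt j; have := hyj j hj.1; have := hp3 j hj.1 hj.2
    have : x j - 2 ≤ G j := by
      simp only [G, if_neg hj.2]
      exact le_oddFloor_min (by omega) (by omega) (by omega)
    omega
  rw [sum_pair hpi.symm, Fintype.card_fin] at key
  have hkm : k * (m - 1) + 2 * k = k * (m + 1) := by
    rw [mul_comm 2 k, ← mul_add]; congr 1; omega
  have := hxodd p
  omega

end Exceptional

section Succ

variable {k b : ℕ} {x y z : Fin (k+1) → ℕ} {i i₀ : Fin (k+1)}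

lemma succ_mem_basicBelow_of_even (hyi : y i = x i) (hyj : ∀ j ≠ i, y j + 1 = x j)
    (hb : Even b) (hz : IsBasic k z b) (hzy : z ≤ y) : b + 1 ∈ basicBelow k x := by
  have hzb := hz.2.1
  have hze := fun j => Nat.even_iff.mp (hz.2.2.1 hb j)
  refine mem_basicBelow_of_odd hb.add_one i (fun j hj => hyj j hj ▸ Nat.le_add_left 1 _) ?_
  set G := fun j => if j = i then evenFloor (min (x j) (b + 1)) else oddFloor (min (x j) (b + 1))
  show k * (b + 1) ≤ ∑ j, G j
  have hGi : z i ≤ G i := by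
    simp only [G, if_pos rfl]
    have := hzb i
    exact le_evenFloor_min (hze i) (hyi ▸ hzy i) (by omega)
  have key := le_sum_sub_sum_of_le_off (f := G) (g := z) 1 {i} fun j hj => by
    rw [mem_singleton] at hj
    have := hze j; have := hzb j; have : z j ≤ y j := hzy j; have := hyj j hj
    have : z j + 1 ≤ G j := by
      simp only [G, if_neg hj]
      exact le_oddFloor_min (by omega) (by omega) (by omega)
    omega
  rw [sum_singleton, Fintype.card_fin, hz.1] at key
  rw [mul_add_one]
  omega

lemma exceptional_of_eq_add (hb : Odd b) (hz : IsBasic k z b) (hi : i ≠ i₀) (hxi : x i = z i)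
    (hxi₀ : x i₀ = z i₀ + 1) (hxj : ∀ j ≠ i, j ≠ i₀ → x j = z j + 2)
    (hxodd : ∀ j, Odd (x j)) (hmax : ∀ j, x j ≤ x i) : Exceptional k x := by
  have key := sum_sub_sum_eq_of_eq_off (f := x) (g := z) 2 {i, i₀} fun j hj => by
    simp only [mem_insert, mem_singleton, not_or] at hj
    rw [hxj j hj.1 hj.2]
    push_cast
    ring
  rw [sum_pair hi, Fintype.card_fin, hxi, hxi₀, hz.1] at key
  have := hz.2.1 i
  refine ⟨b + 1, hb.add_one, hxodd,
    fun j => (hmax j).trans_lt (by omega), ?_⟩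
  rw [mul_add_one]
  omega

lemma le_sum_evenFloor_of_tight (hb : Odd b) (hz : IsBasic k z b) (hi₀ : Even (z i₀))
    (hi : i ≠ i₀) (hxi : x i = z i) (hzx : ∀ j ≠ i, z j + 1 ≤ x j)
    (hxodd : ∀ j, Odd (x j)) (hmax : ∀ j, x j ≤ x i) (hx : ¬ Exceptional k x) :
    k * (b + 1) ≤ ∑ j, evenFloor (min (x j) (b + 1)) := by
  set F := fun j => evenFloor (min (x j) (b + 1))
  show k * (b + 1) ≤ ∑ j, F j
  have hzodd := fun j (hj : j ≠ i₀) => IsBasic.odd_of_ne hz hb hi₀ hj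
  have hzi₀ := Nat.even_iff.mp hi₀
  have hb2 := Nat.odd_iff.mp hb
  have hzb := hz.2.1
  have hFj : ∀ j ≠ i, j ≠ i₀ → z j + 1 ≤ F j := fun j hji hji₀ =>
    le_evenFloor_min (by have := hzodd j hji₀; omega) (hzx j hji) (by have := hzb j; omega)
  have hFi : z i - 1 ≤ F i :=
    have := hzb i
    le_evenFloor_min (by have := hzodd i hi; omega) (by omega) (by omega)
  have hsum := fun (S : Finset (Fin (k+1))) h => le_sum_sub_sum_of_le_off (f := F) (g := z) 1 S h
  simp only [Fintype.card_fin, hz.1] at hsum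
  rw [mul_add_one]
  by_cases h₀ : z i₀ + 2 ≤ x i₀
  · have hFi₀ : z i₀ + 2 ≤ F i₀ :=
      le_evenFloor_min (by omega) h₀ (by have := hzb i₀; omega)
    have key := hsum {i, i₀} fun j hj => by
      simp only [mem_insert, mem_singleton, not_or] at hj
      have := hFj j hj.1 hj.2
      omega
    rw [sum_pair hi] at key
    have := hzodd i hi
    omega
  by_cases hq : ∃ q ≠ i, q ≠ i₀ ∧ z q + 3 ≤ x q
  · obtain ⟨q, hqi, hqi₀, hq⟩ := hq
    have hFq : z q + 3 ≤ F q := by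
      refine le_evenFloor_min (by have := hzodd q hqi₀; omega) hq ?_
      -- `z q = b` is impossible, since then `x q > b ≥ z i = x i`
      have := hzodd q hqi₀; have := hzb q; have := hzb i; have := hmax q
      omega
    have hFi₀ : z i₀ ≤ F i₀ :=
      le_evenFloor_min hzi₀ (by have := hzx i₀ hi.symm; omega) (by have := hzb i₀; omega)
    have key := hsum {i, i₀, q} fun j hj => by
      simp only [mem_insert, mem_singleton, not_or] at hj
      have := hFj j hj.1 hj.2.1
      omega
    rw [sum_insert (by simp [hi, hqi.symm]), sum_pair hqi₀.symm] at key
    have := hzodd i hi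
    omega
  · push Not at hq
    refine absurd (exceptional_of_eq_add hb hz hi hxi ?_ (fun j hji hji₀ => ?_) hxodd hmax) hx
    · have := hzx i₀ hi.symm; omega
    · have := hq j hji hji₀; have := hzx j hji; have := hzodd j hji₀
      have := Nat.odd_iff.mp (hxodd j)
      omega

lemma succ_mem_basicBelow_of_odd (hyi : y i = x i) (hyj : ∀ j ≠ i, y j + 1 = x j)
    (hE : (∃ j, Even (x j)) → Even (x i) ∧ ∀ j, Even (x j) → x i ≤ x j)
    (hO : (∀ j, Odd (x j)) → ∀ j, x j ≤ x i) (hx : ¬ Exceptional k x)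
    (hb : Odd b) (hz : IsBasic k z b) (hzy : z ≤ y) : b + 1 ∈ basicBelow k x := by
  obtain ⟨i₀, hi₀, -⟩ := hz.2.2.2 hb
  have hzx : ∀ j ≠ i, z j + 1 ≤ x j := fun j hj => by
    have : z j ≤ y j := hzy j; have := hyj j hj; omega
  have hzxi : z i ≤ x i := hyi ▸ hzy i
  apply mem_basicBelow_of_even hb.add_one
  by_cases htight : i ≠ i₀ ∧ x i = z i
  · have hxodd : ∀ j, Odd (x j) := fun j => by
      by_contra hj
      have := Nat.even_iff.mp (hE ⟨j, Nat.not_odd_iff_even.mp hj⟩).1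
      have := IsBasic.odd_of_ne hz hb hi₀ htight.1
      omega
    exact le_sum_evenFloor_of_tight hb hz hi₀ htight.1 htight.2 hzx hxodd (hO hxodd) hx
  have hzb := hz.2.1
  have key := le_sum_sub_sum_of_le_off (f := fun j => evenFloor (min (x j) (b + 1))) (g := z) 1
    {i₀} fun j hj => by
      rw [mem_singleton] at hj
      have := IsBasic.odd_of_ne hz hb hi₀ hj
      have : z j + 1 ≤ evenFloor (min (x j) (b + 1)) := by
        refine le_evenFloor_min (by omega) ?_ (by have := hzb j; omega)
        rcases eq_or_ne j i with rfl | hji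
        · omega
        · exact hzx j hji
      omega
  have hFi₀ : z i₀ ≤ evenFloor (min (x i₀) (b + 1)) := by
    refine le_evenFloor_min (Nat.even_iff.mp hi₀) ?_ (by have := hzb i₀; omega)
    rcases eq_or_ne i₀ i with rfl | h
    · exact hzxi
    · have := hzx i₀ h; omega
  rw [sum_singleton, Fintype.card_fin, hz.1] at key
  rw [mul_add_one]
  omega

lemma succ_mem_basicBelow_of_mMove (hmove : MMove k x y) (hx : ¬ Exceptional k x)
    (hb : b ∈ basicBelow k y) : b + 1 ∈ basicBelow k x := by
  obtain ⟨i, hyi, hyj, hE, hO⟩ := exists_keep_of_mMove hmove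
  obtain ⟨z, hz, hzy⟩ := hb
  rcases Nat.even_or_odd b with hb | hb
  · exact succ_mem_basicBelow_of_even hyi hyj hb hz hzy
  · exact succ_mem_basicBelow_of_odd hyi hyj hE hO hx hb hz hzy

end Succ

section Pred

variable {k b : ℕ} {x y z : Fin (k+1) → ℕ} {i : Fin (k+1)}

lemma pred_mem_basicBelow_of_pivot (hb : Even b) (hz : IsBasic k z b) (hzx : z ≤ x)
    (hxy : ∀ j, x j ≤ y j + 1) {p : Fin (k+1)} (hy : ∀ j ≠ p, 1 ≤ y j) (hzp : z p ≤ y p)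
    (hzpb : z p + 2 ≤ b) : b - 1 ∈ basicBelow k y := by
  have hze := fun j => Nat.even_iff.mp (hz.2.2.1 hb j)
  have hzb := hz.2.1
  have hb2 := Nat.even_iff.mp hb
  refine mem_basicBelow_of_odd (Nat.odd_iff.mpr (by omega)) p hy ?_
  set G := fun j => if j = p then evenFloor (min (y j) (b - 1)) else oddFloor (min (y j) (b - 1))
  show k * (b - 1) ≤ ∑ j, G j
  have hGp : z p ≤ G p := by
    simp only [G, if_pos rfl]
    exact le_evenFloor_min (hze p) hzp (by omega)
  have key := le_sum_sub_sum_of_le_off (f := G) (g := z) (-1) {p} fun j hj => by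
    rw [mem_singleton] at hj
    have : z j ≤ G j + 1 := by
      simp only [G, if_neg hj]
      have : z j ≤ x j := hzx j
      have := hxy j; have := hze j; have := hzb j
      have := le_oddFloor_min (t := z j - 1) (a := y j) (c := b - 1)
      omega
    omega
  rw [sum_singleton, Fintype.card_fin, hz.1] at key
  have hkb : k * (b - 1) + k = k * b := by rw [← mul_add_one]; congr 1; omega
  omega

lemma exists_pivot (hyi : y i = x i) (hxy : ∀ j, x j ≤ y j + 1)
    (hE : (∃ j, Even (x j)) → Even (x i) ∧ ∀ j, Even (x j) → x i ≤ x j)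
    (hb : Even b) (hb0 : b ≠ 0) (hz : IsBasic k z b) (hzx : z ≤ x) :
    ∃ p, (∀ j ≠ p, 1 ≤ y j) ∧ z p ≤ y p ∧ z p + 2 ≤ b := by
  have hze := fun j => Nat.even_iff.mp (hz.2.2.1 hb j)
  have hzb := hz.2.1
  have hb2 := Nat.even_iff.mp hb
  have hzy : ∀ j, z j ≤ y j + 1 := fun j => (hzx j).trans (hxy j)
  by_cases h0 : ∃ p, y p = 0
  · obtain ⟨p, hp⟩ := h0
    have hz0 : ∀ j, y j = 0 → z j = 0 := fun j hj => by have := hzy j; have := hze j; omega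
    refine ⟨p, fun j hjp => Nat.one_le_iff_ne_zero.mpr fun hj => hb0 ?_, by simp [hz0 p hp, hp],
      by have := hz0 p hp; omega⟩
    exact IsBasic.eq_zero_of_two_zeros hz hjp (hz0 j hj) (hz0 p hp)
  push Not at h0
  by_contra! hp
  have hzb_of_le : ∀ j, z j ≤ y j → z j = b := fun j h => by
    have := hp j (fun j _ => Nat.one_le_iff_ne_zero.mpr (h0 j)) h
    have := hze j; have := hzb j
    omega
  have hzi : z i ≤ y i := hyi ▸ hzx i
  -- a coordinate with `z j > y j` is an even coordinate of `x`, hence `≥ x i ≥ z i = b`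
  have hzb' : ∀ j, z j = b := fun j => by
    by_cases h : z j ≤ y j
    · exact hzb_of_le j h
    have : z j ≤ x j := hzx j
    have hxj : Even (x j) := by have := hxy j; have := hze j; rw [Nat.even_iff]; omega
    have := (hE ⟨j, hxj⟩).2 j hxj
    have := hzb_of_le i hzi; have := hzb j; have := hxy j
    omega
  have := hz.1
  simp only [hzb', sum_const, card_univ, Fintype.card_fin, smul_eq_mul] at this
  exact hb0 (by nlinarith)

lemma pred_mem_basicBelow_of_odd (hyi : y i = x i) (hxy : ∀ j, x j ≤ y j + 1)
    (hE : (∃ j, Even (x j)) → Even (x i) ∧ ∀ j, Even (x j) → x i ≤ x j)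
    (hb : Odd b) (hz : IsBasic k z b) (hzx : z ≤ x) : b - 1 ∈ basicBelow k y := by
  obtain ⟨i₀, hi₀, -⟩ := hz.2.2.2 hb
  have hzodd := fun j (hj : j ≠ i₀) => IsBasic.odd_of_ne hz hb hi₀ hj
  have hzi₀ := Nat.even_iff.mp hi₀
  have hzb := hz.2.1
  have hb2 := Nat.odd_iff.mp hb
  apply mem_basicBelow_of_even (Nat.even_iff.mpr (by omega))
  set H := fun j => evenFloor (min (y j) (b - 1))
  show k * (b - 1) ≤ ∑ j, H j
  have hsum := fun (S : Finset (Fin (k+1))) h => le_sum_sub_sum_of_le_off (f := H) (g := z) (-1) S h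
  simp only [Fintype.card_fin, hz.1] at hsum
  have hH : ∀ j ≠ i₀, z j ≤ H j + 1 := fun j hj => by
    have := hzodd j hj; have : z j ≤ x j := hzx j; have := hxy j; have := hzb j
    have : z j - 1 ≤ H j := le_evenFloor_min (by omega) (by omega) (by omega)
    omega
  have hkb : k * (b - 1) + k = k * b := by rw [← mul_add_one]; congr 1; omega
  by_cases h : z i₀ ≤ y i₀
  · have key := hsum {i₀} fun j hj => by have := hH j (mem_singleton.not.mp hj); omega
    have : z i₀ ≤ H i₀ := le_evenFloor_min hzi₀ h (by have := hzb i₀; omega)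
    rw [sum_singleton] at key
    omega
  have hi : i ≠ i₀ := by rintro rfl; exact h (hyi ▸ hzx i)
  have hxi₀ : x i₀ = z i₀ := by have : z i₀ ≤ x i₀ := hzx i₀; have := hxy i₀; omega
  obtain ⟨hxi, hxi_le⟩ := hE ⟨i₀, hxi₀ ▸ hi₀⟩
  have := hxi_le i₀ (hxi₀ ▸ hi₀); have := Nat.even_iff.mp hxi; have : z i ≤ x i := hzx i
  have := hzodd i hi; have := hzb i; have := hzb i₀; have := hxy i₀
  have hHi : z i + 1 ≤ H i := le_evenFloor_min (by omega) (by omega) (by omega)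
  have hHi₀ : z i₀ - 2 ≤ H i₀ := le_evenFloor_min (by omega) (by omega) (by omega)
  have key := hsum {i, i₀} fun j hj => by
    simp only [mem_insert, mem_singleton, not_or] at hj
    have := hH j hj.2
    omega
  rw [sum_pair hi] at key
  omega

lemma pred_mem_basicBelow_of_mMove (hmove : MMove k x y) (hb : b ∈ basicBelow k x) :
    b - 1 ∈ basicBelow k y := by
  obtain ⟨i, hyi, -, hE, -⟩ := exists_keep_of_mMove hmove
  have hxy := le_add_one_of_mMove hmove
  obtain ⟨z, hz, hzx⟩ := hb
  rcases Nat.even_or_odd b with hb | hb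
  · rcases eq_or_ne b 0 with rfl | hb0
    · exact zero_mem_basicBelow k y
    obtain ⟨p, hy, hzp, hzpb⟩ := exists_pivot hyi hxy hE hb hb0 hz hzx
    exact pred_mem_basicBelow_of_pivot hb hz hzx hxy hy hzp hzpb
  · exact pred_mem_basicBelow_of_odd hyi hxy hE hb hz hzx

end Pred

section BVal

variable {k : ℕ} {x y : Fin (k+1) → ℕ}

lemma bVal_eq_succ_of_mMove (hk : 0 < k) (hmove : MMove k x y) (hx : ¬ Exceptional k x) :
    BVal k x = BVal k y + 1 :=
  le_antisymm
    (Nat.sub_le_iff_le_add.mp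
      (le_bVal hk (pred_mem_basicBelow_of_mMove hmove (bVal_mem_basicBelow hk x))))
    (le_bVal hk (succ_mem_basicBelow_of_mMove hmove hx (bVal_mem_basicBelow hk y)))

lemma bVal_eq_of_mMove_of_exceptional (hk : 2 ≤ k) (hmove : MMove k x y)
    (hx : Exceptional k x) : BVal k x = BVal k y := by
  obtain ⟨m, hm, hodd, hlt, hsum⟩ := hx
  have hsum' : ∑ j, x j + 1 = k * (m + 1) := by rw [hsum, mul_add_one]; omega
  have hxm := lt_of_mem_basicBelow_of_exceptional hm hodd hsum' (bVal_mem_basicBelow (by omega) x)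
  have hym := le_bVal (by omega)
    (pred_mem_basicBelow_of_mMove_of_exceptional hk hmove hm hodd hlt hsum')
  have hyx := bVal_mono (by omega) (le_of_mMove hmove)
  omega

end BVal

end Nim

open Nim

theorem stmt17 (k : ℕ) (hk : 2 ≤ k) (x : Fin (k+1) → ℕ) (m : ℕ)
    (h : MVal k x m) :
    (¬ Exceptional k x → m = BVal k x) ∧
    (Exceptional k x → m = BVal k x + 1) := by
  induction h with
  | zero x hx =>
    exact ⟨fun _ => (bVal_eq_zero_of_terminal (by omega) hx).symm,
      fun hex => absurd hex (not_exceptional_of_terminal hx)⟩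
  | succ x y m hmove _ ih =>
    have hm := ih.1 (not_exceptional_of_mMove (by omega) hmove)
    refine ⟨fun hx => ?_, fun hx => ?_⟩
    · rw [bVal_eq_succ_of_mMove (by omega) hmove hx, hm]
    · rw [bVal_eq_of_mMove_of_exceptional hk hmove hx, hm]
end
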